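/- Let A₁ and A₂ be Hermitian complex square matrices with A₁² = I and A₂² = I. Then for every matrix M of the appropriate size, (A₁⊗A₂)M + M(A₁⊗A₂) = (1/8)·Σ_{α₁,α₂∈{±1}} α₁α₂ [ ((I+α₁A₁)⊗(I+α₂A₂)) M ((I+α₁A₁)⊗(I+α₂A₂))† − ((I+iα₁A₁)⊗(I+iα₂A₂)) M ((I+iα₁A₁)⊗(I+iα₂A₂))† ]. -/

import Mathlib

/-!
Write `X = A₁ ⊗ 1`, `Y = 1 ⊗ A₂`, so that `A₁ ⊗ A₂ = X Y` and
`(1 + a A₁) ⊗ (1 + b A₂) = (1 + a X)(1 + b Y)`. Conjugating `M` by this product is conjugating by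
`1 + b Y` and then by `1 + a X`, and for a single factor the signed sums are
`∑ α (1 + α X) N (1 + α X)⋆ = 2 (X N + N X⋆)` and `∑ α (1 + iα X) N (1 + iα X)⋆ = 2i (X N - N X⋆)`.
Composing, the real sum gives `4 (XYM + XMY⋆ + YMX⋆ + MY⋆X⋆)` and the imaginary one
`-4 (XYM - XMY⋆ - YMX⋆ + MY⋆X⋆)`; the cross terms cancel in the difference, leaving
`8 (XY M + M (XY)⋆)`. This holds in any complex star algebra, and `(A₁ ⊗ A₂)ᴴ = A₁ ⊗ A₂` for
Hermitian `A₁`, `A₂`.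
-/

open Matrix Kronecker

section Sandwich

variable {R : Type*} [Ring R] [StarRing R] [Algebra ℂ R]

def sandwich (c : ℂ) (X : R) : R →ₗ[ℂ] R :=
  LinearMap.mulLeft ℂ (1 + c • X) ∘ₗ LinearMap.mulRight ℂ (star (1 + c • X))

lemma sandwich_apply (c : ℂ) (X N : R) :
    sandwich c X N = (1 + c • X) * N * star (1 + c • X) := by
  simp [sandwich, mul_assoc]

lemma sandwich_sandwich (c d : ℂ) (X Y N : R) :
    sandwich c X (sandwich d Y N) =
      (1 + c • X) * (1 + d • Y) * N * star ((1 + c • X) * (1 + d • Y)) := by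
  simp only [sandwich_apply, star_mul, mul_assoc]

lemma sum_sum_mul_smul_sandwich (s : Finset ℂ) (f : ℂ → ℂ) (X Y M : R) :
    ∑ α₁ ∈ s, ∑ α₂ ∈ s, (α₁ * α₂) • sandwich (f α₁) X (sandwich (f α₂) Y M) =
      ∑ α₁ ∈ s, α₁ • sandwich (f α₁) X (∑ α₂ ∈ s, α₂ • sandwich (f α₂) Y M) := by
  simp only [map_sum, map_smul, Finset.smul_sum, smul_smul]

variable [StarModule ℂ R]

lemma sum_sign_smul_sandwich (X N : R) :
    ∑ α ∈ ({1, -1} : Finset ℂ), α • sandwich α X N = (2 : ℂ) • (X * N + N * star X) := by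
  rw [Finset.sum_pair (by norm_num)]
  simp only [sandwich_apply, star_add, star_one, star_smul, star_neg]
  simp only [add_mul, mul_add, neg_mul, mul_neg, one_mul, mul_one, neg_smul, one_smul]
  module

lemma sum_sign_smul_sandwich_I (X N : R) :
    ∑ α ∈ ({1, -1} : Finset ℂ), α • sandwich (Complex.I * α) X N =
      (2 * Complex.I) • (X * N - N * star X) := by
  rw [Finset.sum_pair (by norm_num)]
  simp only [sandwich_apply, star_add, star_one, star_smul, RCLike.star_def, map_mul, map_one,
    map_neg, Complex.conj_I]
  simp only [add_mul, mul_add, smul_mul_assoc, mul_smul_comm, one_mul, mul_one]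
  match_scalars <;> ring_nf

lemma sum_sum_sign_smul_sandwich (X Y M : R) :
    ∑ α₁ ∈ ({1, -1} : Finset ℂ), ∑ α₂ ∈ ({1, -1} : Finset ℂ),
        (α₁ * α₂) • sandwich α₁ X (sandwich α₂ Y M) =
      (4 : ℂ) • (X * (Y * M + M * star Y) + (Y * M + M * star Y) * star X) := by
  rw [sum_sum_mul_smul_sandwich _ (fun α => α), sum_sign_smul_sandwich Y M]
  simp only [map_smul, smul_comm _ (2 : ℂ)]
  rw [← Finset.smul_sum, sum_sign_smul_sandwich, smul_smul]
  norm_num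

lemma sum_sum_sign_smul_sandwich_I (X Y M : R) :
    ∑ α₁ ∈ ({1, -1} : Finset ℂ), ∑ α₂ ∈ ({1, -1} : Finset ℂ),
        (α₁ * α₂) • sandwich (Complex.I * α₁) X (sandwich (Complex.I * α₂) Y M) =
      (-4 : ℂ) • (X * (Y * M - M * star Y) - (Y * M - M * star Y) * star X) := by
  rw [sum_sum_mul_smul_sandwich _ (fun α => Complex.I * α), sum_sign_smul_sandwich_I Y M]
  simp only [map_smul, smul_comm _ (2 * Complex.I)]
  rw [← Finset.smul_sum, sum_sign_smul_sandwich_I, smul_smul]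
  congr 1
  linear_combination (4 : ℂ) * Complex.I_sq

theorem mul_mul_add_mul_star_eq_sum (X Y M : R) :
    X * Y * M + M * star (X * Y) =
      (8 : ℂ)⁻¹ • ∑ α₁ ∈ ({1, -1} : Finset ℂ), ∑ α₂ ∈ ({1, -1} : Finset ℂ),
        (α₁ * α₂) •
          ((1 + α₁ • X) * (1 + α₂ • Y) * M * star ((1 + α₁ • X) * (1 + α₂ • Y)) -
            (1 + (Complex.I * α₁) • X) * (1 + (Complex.I * α₂) • Y) * M *
              star ((1 + (Complex.I * α₁) • X) * (1 + (Complex.I * α₂) • Y))) := by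
  simp only [← sandwich_sandwich, smul_sub, Finset.sum_sub_distrib]
  rw [sum_sum_sign_smul_sandwich, sum_sum_sign_smul_sandwich_I, star_mul]
  simp only [mul_add, add_mul, mul_sub, sub_mul, mul_assoc]
  module

end Sandwich

section Kronecker

variable {α ι κ : Type*} [CommRing α] [Fintype ι] [Fintype κ] [DecidableEq ι] [DecidableEq κ]

lemma kronecker_one_mul_one_kronecker (A : Matrix ι ι α) (B : Matrix κ κ α) :
    (A ⊗ₖ (1 : Matrix κ κ α)) * ((1 : Matrix ι ι α) ⊗ₖ B) = A ⊗ₖ B := by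
  rw [← mul_kronecker_mul, mul_one, one_mul]

lemma one_add_smul_kronecker_one_add_smul (a b : α) (A : Matrix ι ι α) (B : Matrix κ κ α) :
    (1 + a • A) ⊗ₖ (1 + b • B) =
      (1 + a • (A ⊗ₖ (1 : Matrix κ κ α))) * (1 + b • ((1 : Matrix ι ι α) ⊗ₖ B)) := by
  rw [← kronecker_one_mul_one_kronecker]
  simp only [add_kronecker, kronecker_add, smul_kronecker, kronecker_smul, one_kronecker_one]

end Kronecker

theorem stmt_7_general (n m : ℕ)
    (A₁ : Matrix (Fin n) (Fin n) ℂ) (A₂ : Matrix (Fin m) (Fin m) ℂ)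
    (hH₁ : A₁.IsHermitian) (hH₂ : A₂.IsHermitian)
    (M : Matrix (Fin n × Fin m) (Fin n × Fin m) ℂ) :
    let T : Matrix (Fin n × Fin m) (Fin n × Fin m) ℂ := A₁ ⊗ₖ A₂
    T * M + M * T =
      ((8 : ℂ))⁻¹ • ∑ α₁ ∈ ({1, -1} : Finset ℂ), ∑ α₂ ∈ ({1, -1} : Finset ℂ),
        (α₁ * α₂) •
          ((((1 + α₁ • A₁) ⊗ₖ (1 + α₂ • A₂)) * M *
              (((1 + α₁ • A₁) ⊗ₖ (1 + α₂ • A₂)))ᴴ) -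
            (((1 + (Complex.I * α₁) • A₁) ⊗ₖ (1 + (Complex.I * α₂) • A₂)) * M *
              (((1 + (Complex.I * α₁) • A₁) ⊗ₖ (1 + (Complex.I * α₂) • A₂)))ᴴ)) := by
  intro T
  have hT_star : star T = T := by
    rw [star_eq_conjTranspose, conjTranspose_kronecker, hH₁.eq, hH₂.eq]
  simp only [one_add_smul_kronecker_one_add_smul, ← star_eq_conjTranspose]
  rw [← mul_mul_add_mul_star_eq_sum, kronecker_one_mul_one_kronecker, hT_star]

theorem stmt_7 (n m : ℕ)
    (A₁ : Matrix (Fin n) (Fin n) ℂ) (A₂ : Matrix (Fin m) (Fin m) ℂ)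
    (hA₁ : A₁ * A₁ = 1) (hA₂ : A₂ * A₂ = 1)
    (hH₁ : A₁.IsHermitian) (hH₂ : A₂.IsHermitian)
    (M : Matrix (Fin n × Fin m) (Fin n × Fin m) ℂ) :
    let T : Matrix (Fin n × Fin m) (Fin n × Fin m) ℂ := A₁ ⊗ₖ A₂
    T * M + M * T =
      ((8 : ℂ))⁻¹ • ∑ α₁ ∈ ({1, -1} : Finset ℂ), ∑ α₂ ∈ ({1, -1} : Finset ℂ),
        (α₁ * α₂) •
          ((((1 + α₁ • A₁) ⊗ₖ (1 + α₂ • A₂)) * M *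
              (((1 + α₁ • A₁) ⊗ₖ (1 + α₂ • A₂)))ᴴ) -
            (((1 + (Complex.I * α₁) • A₁) ⊗ₖ (1 + (Complex.I * α₂) • A₂)) * M *
              (((1 + (Complex.I * α₁) • A₁) ⊗ₖ (1 + (Complex.I * α₂) • A₂)))ᴴ)) :=
  stmt_7_general n m A₁ A₂ hH₁ hH₂ M
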